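/- arXiv:1005.3690 — 4 statements merged into one kernel-verified Lean document; each statement's English description precedes it below -/
import Mathlib

section
/- Let A : ℝ → ℂ be P-times continuously differentiable, supported on a finite interval [a,b], with |A^(ν)(x)| ≤ A₀·A₁^(−ν) for all 0 ≤ ν ≤ P and x ∈ [a,b]. Let B : ℝ → ℝ be smooth on [a,b] with |B'(x)| ≥ B₁ > 0 on [a,b], and suppose moreover that B extends to a holomorphic function on the ρ-neighborhood of [a,b] with |B'| ≥ B₁ there. Then |∫_a^b A(x)·e(B(x)) dx| ≤ C·A₀·(A₁B₁)^(−P)·(1 + A₁/ρ)^P·(b−a), where e(t) = exp(2πit) and C depends only on P. -/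
open Real MeasureTheory Set Filter Topology

noncomputable def gseq (A h : ℝ → ℂ) (V : Set ℝ) : ℕ → ℝ → ℂ
  | 0 => A
  | (k+1) => derivWithin (fun t => gseq A h V k t * h t) V

def cconst : ℕ → ℕ → ℕ
  | 0, _ => 1
  | (k+1), j => ∑ i ∈ Finset.range (j+2),
      (j+1).choose i * (j+1-i).factorial * 2^(j+1-i) * cconst k i

lemma cconst_pos (k j : ℕ) : 0 < cconst k j := by
  induction k generalizing j with
  | zero => simp [cconst]
  | succ k ih =>
    rw [cconst]
    apply Finset.sum_pos
    · intro i hi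
      have hi' : i ≤ j + 1 := by simpa [Nat.lt_succ_iff] using Finset.mem_range.mp hi
      exact Nat.mul_pos (Nat.mul_pos (Nat.mul_pos (Nat.choose_pos hi')
        (Nat.factorial_pos _)) (Nat.pow_pos (by norm_num))) (ih i)
    · exact ⟨0, by simp⟩

/-- Cauchy estimate for iterated derivatives. -/
lemma cauchy_est {f : ℂ → ℂ} {c : ℂ} {r M : ℝ} (hr : 0 < r)
    (hf : DifferentiableOn ℂ f (Metric.closedBall c r))
    (hM : ∀ z ∈ Metric.closedBall c r, ‖f z‖ ≤ M) (n : ℕ) :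
    ‖iteratedDeriv n f c‖ ≤ n.factorial * M * r⁻¹ ^ n := by
  have hM0 : 0 ≤ M := le_trans (norm_nonneg _) (hM c (Metric.mem_closedBall_self hr.le))
  set R : NNReal := ⟨r, hr.le⟩ with hR
  have hps : HasFPowerSeriesOnBall f (cauchyPowerSeries f c R) c R :=
    hf.hasFPowerSeriesOnBall (by exact_mod_cast hr)
  have h1 : iteratedDeriv n f c = n.factorial • ((cauchyPowerSeries f c R) n (fun _ => (1:ℂ))) := by
    rw [iteratedDeriv_eq_iteratedFDeriv, ← hps.factorial_smul (1:ℂ) n]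
  have h2 : ‖iteratedDeriv n f c‖ ≤ n.factorial * ‖cauchyPowerSeries f c R n‖ := by
    rw [h1, ← Nat.cast_smul_eq_nsmul ℝ, norm_smul, Real.norm_natCast]
    gcongr
    calc ‖(cauchyPowerSeries f c R n) (fun _ => (1:ℂ))‖
        ≤ ‖cauchyPowerSeries f c R n‖ * ∏ _i : Fin n, ‖(1:ℂ)‖ :=
          (cauchyPowerSeries f c R n).le_opNorm _
      _ = ‖cauchyPowerSeries f c R n‖ := by simp
  have h3 : ‖cauchyPowerSeries f c R n‖ ≤ M * r⁻¹ ^ n := by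
    refine le_trans (norm_cauchyPowerSeries_le f c R n) ?_
    have habs : |(R:ℝ)| = r := by rw [hR]; exact abs_of_nonneg hr.le
    rw [habs]
    apply mul_le_mul_of_nonneg_right _ (pow_nonneg (inv_nonneg.mpr hr.le) n)
    have hcont : ContinuousOn (fun θ : ℝ => ‖f (circleMap c r θ)‖) (Set.uIcc 0 (2*π)) := by
      apply ContinuousOn.norm
      apply hf.continuousOn.comp (continuous_circleMap c r).continuousOn
      intro θ _
      exact Metric.sphere_subset_closedBall (circleMap_mem_sphere c hr.le θ)
    have hint : IntervalIntegrable (fun θ : ℝ => ‖f (circleMap c r θ)‖) volume 0 (2*π) :=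
      hcont.intervalIntegrable
    have : (∫ θ : ℝ in (0)..2 * π, ‖f (circleMap c (R:ℝ) θ)‖) ≤ 2 * π * M := by
      have : (∫ θ : ℝ in (0)..2 * π, ‖f (circleMap c (R:ℝ) θ)‖) ≤
          ∫ _θ : ℝ in (0)..2 * π, M := by
        apply intervalIntegral.integral_mono_on Real.two_pi_pos.le hint
          intervalIntegrable_const
        intro θ _
        exact hM _ (Metric.sphere_subset_closedBall (circleMap_mem_sphere c hr.le θ))
      calc (∫ θ : ℝ in (0)..2 * π, ‖f (circleMap c (R:ℝ) θ)‖) ≤ ∫ _θ : ℝ in (0)..2 * π, M := this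
        _ = 2 * π * M := by simp [mul_comm]
    calc (2 * π)⁻¹ * ∫ θ : ℝ in (0)..2 * π, ‖f (circleMap c (R:ℝ) θ)‖
        ≤ (2 * π)⁻¹ * (2 * π * M) := by
          exact mul_le_mul_of_nonneg_left this (inv_nonneg.mpr Real.two_pi_pos.le)
      _ = M := by field_simp
  calc ‖iteratedDeriv n f c‖ ≤ n.factorial * ‖cauchyPowerSeries f c R n‖ := h2
    _ ≤ n.factorial * (M * r⁻¹ ^ n) := by gcongr
    _ = n.factorial * M * r⁻¹ ^ n := by ring

/-- Iterated derivative of the restriction to ℝ of a holomorphic function. -/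
lemma iter_ofReal {U : Set ℂ} (hU : IsOpen U) (n : ℕ) :
    ∀ (F : ℂ → ℂ), AnalyticOnNhd ℂ F U → ∀ x : ℝ, (x:ℂ) ∈ U →
      iteratedDeriv n (fun t : ℝ => F t) x = iteratedDeriv n F x := by
  induction n with
  | zero => intro F hF x hx; simp
  | succ n ih =>
    intro F hF x hx
    rw [iteratedDeriv_succ', iteratedDeriv_succ']
    have hV : IsOpen ((fun t : ℝ => (t:ℂ)) ⁻¹' U) := hU.preimage Complex.continuous_ofReal
    have heq : Set.EqOn (deriv (fun t : ℝ => F t)) (fun t : ℝ => deriv F t)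
        ((fun t : ℝ => (t:ℂ)) ⁻¹' U) := by
      intro y hy
      have hd : HasDerivAt F (deriv F y) y :=
        ((hF y hy).differentiableAt).hasDerivAt
      exact hd.comp_ofReal.deriv
    rw [heq.iteratedDeriv_of_isOpen hV n hx]
    exact ih (deriv F) (hF.deriv) x hx

lemma vanish_left {f : ℝ → ℂ} {V : Set ℝ} (hV : IsOpen V) {a : ℝ} (ha : a ∈ V)
    (hf : ContinuousOn f V) (h0 : ∀ y ∈ V, y < a → f y = 0) : f a = 0 := by
  have hca : ContinuousAt f a := hf.continuousAt (hV.mem_nhds ha)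
  have h1 : Tendsto f (𝓝[<] a) (𝓝 (f a)) := hca.tendsto.mono_left nhdsWithin_le_nhds
  have hev : ∀ᶠ y in 𝓝[<] a, f y = 0 := by
    filter_upwards [self_mem_nhdsWithin, mem_nhdsWithin_of_mem_nhds (hV.mem_nhds ha)]
      with y hy1 hy2
    exact h0 y hy2 hy1
  have h2 : Tendsto f (𝓝[<] a) (𝓝 0) := Tendsto.congr' (hev.mono fun y h => h.symm)
    tendsto_const_nhds
  exact tendsto_nhds_unique h1 h2

lemma vanish_right {f : ℝ → ℂ} {V : Set ℝ} (hV : IsOpen V) {b : ℝ} (hb : b ∈ V)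
    (hf : ContinuousOn f V) (h0 : ∀ y ∈ V, b < y → f y = 0) : f b = 0 := by
  have hca : ContinuousAt f b := hf.continuousAt (hV.mem_nhds hb)
  have h1 : Tendsto f (𝓝[>] b) (𝓝 (f b)) := hca.tendsto.mono_left nhdsWithin_le_nhds
  have hev : ∀ᶠ y in 𝓝[>] b, f y = 0 := by
    filter_upwards [self_mem_nhdsWithin, mem_nhdsWithin_of_mem_nhds (hV.mem_nhds hb)]
      with y hy1 hy2
    exact h0 y hy2 hy1
  have h2 : Tendsto f (𝓝[>] b) (𝓝 0) := Tendsto.congr' (hev.mono fun y h => h.symm)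
    tendsto_const_nhds
  exact tendsto_nhds_unique h1 h2
open Real MeasureTheory Set Filter Topology

lemma iDW_open {f : ℝ → ℂ} {V : Set ℝ} (hV : IsOpen V) {x : ℝ} (hx : x ∈ V) (n : ℕ) :
    iteratedDerivWithin n f V x = iteratedDeriv n f x := by
  rw [iteratedDerivWithin_eq_iteratedFDerivWithin, iteratedFDerivWithin_of_isOpen n hV hx,
    iteratedDeriv_eq_iteratedFDeriv]

theorem stmt3 (P : ℕ) :
    ∃ C > 0, ∀ (A : ℝ → ℂ) (B : ℂ → ℂ) (a b A₀ A₁ B₁ ρ : ℝ),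
      a ≤ b → 0 < A₀ → 0 < A₁ → 0 < B₁ → 0 < ρ →
      ContDiff ℝ P A →
      Function.support A ⊆ Set.Icc a b →
      (∀ ν ≤ P, ∀ x ∈ Set.Icc a b, ‖iteratedDeriv ν A x‖ ≤ A₀ * A₁ ^ (-(ν:ℝ))) →
      DifferentiableOn ℂ B {z : ℂ | ∃ x ∈ Set.Icc a b, ‖z - x‖ ≤ ρ} →
      (∀ x ∈ Set.Icc a b, (B x).im = 0) →
      (∀ z ∈ {z : ℂ | ∃ x ∈ Set.Icc a b, ‖z - x‖ ≤ ρ}, B₁ ≤ ‖deriv B z‖) →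
      ‖∫ x in a..b, A x * Complex.exp (2*π*Complex.I * B x)‖ ≤
        C * A₀ * (A₁*B₁)^(-(P:ℝ)) * (1 + A₁/ρ)^P * (b - a) := by
  refine ⟨(cconst P 0 : ℝ), by exact_mod_cast cconst_pos P 0, ?_⟩
  intro A B a b A₀ A₁ B₁ ρ hab hA₀ hA₁ hB₁ hρ hA hsupp hAd hB hBim hB'
  set T : ℝ := A₁⁻¹ + ρ⁻¹ with hT
  have hTpos : 0 < T := by positivity
  set U : Set ℂ := ⋃ x ∈ Set.Icc a b, Metric.ball (x:ℂ) ρ with hU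
  have hUopen : IsOpen U := isOpen_biUnion fun x _ => Metric.isOpen_ball
  have hUS : U ⊆ {z : ℂ | ∃ x ∈ Set.Icc a b, ‖z - x‖ ≤ ρ} := by
    intro z hz
    rcases Set.mem_iUnion₂.mp hz with ⟨x, hx, hzx⟩
    exact ⟨x, hx, by rw [← Complex.dist_eq]; exact (Metric.mem_ball.mp hzx).le⟩
  set V : Set ℝ := (fun t : ℝ => (t:ℂ)) ⁻¹' U with hV
  have hVopen : IsOpen V := hUopen.preimage Complex.continuous_ofReal
  have hIV : Set.Icc a b ⊆ V := by
    intro x hx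
    exact Set.mem_iUnion₂.mpr ⟨x, hx, by simp [hρ]⟩
  have hVu : UniqueDiffOn ℝ V := hVopen.uniqueDiffOn
  have hBanal : AnalyticOnNhd ℂ B U := (hB.mono hUS).analyticOnNhd hUopen
  have hφ : AnalyticOnNhd ℂ (deriv B) U := hBanal.deriv
  have hne : ∀ z ∈ U, (2*π*Complex.I) * deriv B z ≠ 0 := by
    intro z hz
    have h1 : B₁ ≤ ‖deriv B z‖ := hB' z (hUS hz)
    have h2 : deriv B z ≠ 0 := by
      intro h; rw [h, norm_zero] at h1; linarith
    have h3 : (2*π*Complex.I : ℂ) ≠ 0 := by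
      simp [Complex.I_ne_zero, Real.pi_ne_zero, Complex.ofReal_ne_zero]
    exact mul_ne_zero h3 h2
  set H : ℂ → ℂ := fun z => ((2*π*Complex.I) * deriv B z)⁻¹ with hHdef
  have hHanal : AnalyticOnNhd ℂ H U := (analyticOnNhd_const.mul hφ).inv hne
  set h : ℝ → ℂ := fun t : ℝ => H t with hhdef
  have hh : ∀ n : ℕ, ContDiffOn ℝ n h V := by
    intro n
    have h1 : ContDiffOn ℂ n H U := hHanal.contDiffOn_of_completeSpace
    exact (h1.restrict_scalars ℝ).comp
      (Complex.ofRealCLM.contDiff.contDiffOn) (fun x hx => hx)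
  -- bound on derivatives of h
  have hhb : ∀ (m : ℕ), ∀ x ∈ Set.Icc a b,
      ‖iteratedDerivWithin m h V x‖ ≤ m.factorial * 2^m * B₁⁻¹ * T^m := by
    intro m x hx
    have hxV : x ∈ V := hIV hx
    rw [iDW_open hVopen hxV m, iter_ofReal hUopen m H hHanal x hxV]
    have hsub : Metric.closedBall (x:ℂ) (ρ/2) ⊆ U := by
      intro z hz
      refine Set.mem_iUnion₂.mpr ⟨x, hx, ?_⟩
      rw [Metric.mem_ball]
      calc dist z (x:ℂ) ≤ ρ/2 := Metric.mem_closedBall.mp hz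
        _ < ρ := by linarith
    have hfd : DifferentiableOn ℂ H (Metric.closedBall (x:ℂ) (ρ/2)) :=
      hHanal.differentiableOn.mono hsub
    have hMb : ∀ z ∈ Metric.closedBall (x:ℂ) (ρ/2), ‖H z‖ ≤ (2*π*B₁)⁻¹ := by
      intro z hz
      have h1 : B₁ ≤ ‖deriv B z‖ := hB' z (hUS (hsub hz))
      have h2 : ‖H z‖ = ‖(2*π*Complex.I) * deriv B z‖⁻¹ := by
        simp [hHdef]
      have h30 : ‖(2*(π:ℂ)*Complex.I : ℂ)‖ = 2*π := by
        rw [norm_mul, Complex.norm_I, mul_one]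
        have : (2*(π:ℂ) : ℂ) = ((2*π : ℝ) : ℂ) := by push_cast; ring
        rw [this, Complex.norm_real, Real.norm_eq_abs, abs_of_pos (by positivity)]
      have h3 : ‖(2*(π:ℂ)*Complex.I : ℂ) * deriv B z‖ = 2*π*‖deriv B z‖ := by
        rw [norm_mul, h30]
      rw [h2, h3]
      apply inv_anti₀ (by positivity)
      have : (1:ℝ) ≤ 2*π := by nlinarith [pi_gt_three]
      calc 2*π*B₁ ≤ 2*π*‖deriv B z‖ := by nlinarith
        _ = 2*π*‖deriv B z‖ := rfl
    have hcau := cauchy_est (by positivity : (0:ℝ) < ρ/2) hfd hMb m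
    refine le_trans hcau ?_
    have h2pi : (1:ℝ) ≤ 2*π := by nlinarith [pi_gt_three]
    have e1 : ((ρ/2)⁻¹ : ℝ) = 2 * ρ⁻¹ := by
      field_simp
    have e2 : ((ρ/2)⁻¹ : ℝ)^m ≤ 2^m * T^m := by
      rw [e1, mul_pow]
      refine mul_le_mul_of_nonneg_left (pow_le_pow_left₀ (inv_nonneg.mpr hρ.le) ?_ m)
        (by positivity)
      rw [hT]; exact le_add_of_nonneg_left (by positivity)
    have e3 : ((2*π*B₁)⁻¹ : ℝ) ≤ B₁⁻¹ := by
      rw [mul_inv]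
      calc (2*π)⁻¹ * B₁⁻¹ ≤ 1 * B₁⁻¹ :=
            mul_le_mul_of_nonneg_right (inv_le_one_of_one_le₀ h2pi) (by positivity)
        _ = B₁⁻¹ := one_mul _
    calc (m.factorial : ℝ) * (2*π*B₁)⁻¹ * ((ρ/2)⁻¹)^m
        ≤ (m.factorial : ℝ) * B₁⁻¹ * (2^m * T^m) := by
          apply mul_le_mul
          · exact mul_le_mul_of_nonneg_left e3 (Nat.cast_nonneg _)
          · exact e2
          · positivity
          · positivity
      _ = m.factorial * 2^m * B₁⁻¹ * T^m := by ring
  set g : ℕ → ℝ → ℂ := gseq A h V with hg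
  -- smoothness
  have hgsm : ∀ k, k ≤ P → ContDiffOn ℝ ((P - k : ℕ)) (g k) V := by
    intro k
    induction k with
    | zero =>
      intro _
      simpa [hg, gseq] using (hA.contDiffOn.mono (Set.subset_univ V))
    | succ k ih =>
      intro hk
      have hk' : k ≤ P := Nat.le_of_succ_le hk
      have h1 : ContDiffOn ℝ ((P - k : ℕ)) (fun t => g k t * h t) V :=
        (ih hk').mul ((hh (P - k)))
      have h2 : ((P - (k+1) : ℕ) : WithTop ℕ∞) + 1 ≤ ((P - k : ℕ) : WithTop ℕ∞) := by
        have : (P - (k+1)) + 1 = P - k := by omega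
        exact_mod_cast this.le
      exact h1.derivWithin hVu h2
  -- norm bounds
  have hbound : ∀ k j, k + j ≤ P → ∀ x ∈ Set.Icc a b,
      ‖iteratedDerivWithin j (g k) V x‖ ≤ (cconst k j) * A₀ * (B₁⁻¹)^k * T^(k+j) := by
    intro k
    induction k with
    | zero =>
      intro j hj x hx
      rw [iDW_open hVopen (hIV hx) j]
      have h1 : ‖iteratedDeriv j A x‖ ≤ A₀ * A₁ ^ (-(j:ℝ)) := hAd j (by omega) x hx
      have h2 : (A₁:ℝ) ^ (-(j:ℝ)) = (A₁⁻¹)^j := by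
        rw [Real.rpow_neg hA₁.le, Real.rpow_natCast, inv_pow]
      have h3 : (A₁⁻¹:ℝ)^j ≤ T^j := by
        apply pow_le_pow_left₀ (by positivity)
        rw [hT]; exact le_add_of_nonneg_right (by positivity)
      calc ‖iteratedDeriv j A x‖ ≤ A₀ * (A₁⁻¹)^j := by rw [← h2]; exact h1
        _ ≤ A₀ * T^j := by exact mul_le_mul_of_nonneg_left h3 hA₀.le
        _ = (cconst 0 j) * A₀ * (B₁⁻¹)^0 * T^(0+j) := by simp [cconst]
    | succ k ih =>
      intro j hj x hx
      have hxV : x ∈ V := hIV hx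
      have hkP : k ≤ P := by omega
      -- rewrite as (j+1)-th derivative of the product
      have hrw : iteratedDerivWithin j (g (k+1)) V x
          = iteratedDerivWithin (j+1) (fun t => g k t * h t) V x := by
        have : g (k+1) = derivWithin (fun t => g k t * h t) V := rfl
        rw [this, ← iteratedDerivWithin_succ']
      rw [hrw]
      -- Leibniz
      have hgk : ContDiffOn ℝ ((P - k : ℕ)) (g k) V := hgsm k hkP
      have hleib := norm_iteratedFDerivWithin_mul_le (𝕜 := ℝ)
        (f := g k) (g := h) (N := ((P - k : ℕ) : WithTop ℕ∞)) hgk (hh (P-k)) hVu hxV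
        (n := j+1) (by exact_mod_cast (by omega : j + 1 ≤ P - k))
      have hnorm : ‖iteratedDerivWithin (j+1) (fun t => g k t * h t) V x‖
          = ‖iteratedFDerivWithin ℝ (j+1) (fun t => g k t * h t) V x‖ :=
        (norm_iteratedFDerivWithin_eq_norm_iteratedDerivWithin).symm
      rw [hnorm]
      refine le_trans hleib ?_
      have hterm : ∀ i ∈ Finset.range (j+2),
          ((j+1).choose i : ℝ) * ‖iteratedFDerivWithin ℝ i (g k) V x‖ *
            ‖iteratedFDerivWithin ℝ (j+1-i) h V x‖ ≤
          ((j+1).choose i * (j+1-i).factorial * 2^(j+1-i) * cconst k i : ℕ) *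
            (A₀ * (B₁⁻¹)^(k+1) * T^(k+1+j)) := by
        intro i hi
        have hi' : i ≤ j + 1 := by
          have := Finset.mem_range.mp hi; omega
        have e1 : ‖iteratedFDerivWithin ℝ i (g k) V x‖
            ≤ (cconst k i) * A₀ * (B₁⁻¹)^k * T^(k+i) := by
          rw [norm_iteratedFDerivWithin_eq_norm_iteratedDerivWithin]
          exact ih i (by omega) x hx
        have e2 : ‖iteratedFDerivWithin ℝ (j+1-i) h V x‖
            ≤ ((j+1-i).factorial) * 2^(j+1-i) * B₁⁻¹ * T^(j+1-i) := by
          rw [norm_iteratedFDerivWithin_eq_norm_iteratedDerivWithin]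
          exact hhb (j+1-i) x hx
        have hTe : T^(k+i) * T^(j+1-i) = T^(k+1+j) := by
          rw [← pow_add]; congr 1; omega
        calc ((j+1).choose i : ℝ) * ‖iteratedFDerivWithin ℝ i (g k) V x‖ *
              ‖iteratedFDerivWithin ℝ (j+1-i) h V x‖
            ≤ ((j+1).choose i : ℝ) * ((cconst k i) * A₀ * (B₁⁻¹)^k * T^(k+i)) *
              (((j+1-i).factorial) * 2^(j+1-i) * B₁⁻¹ * T^(j+1-i)) := by
              apply mul_le_mul (mul_le_mul_of_nonneg_left e1 (by positivity)) e2
                (norm_nonneg _) (by positivity)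
          _ = ((j+1).choose i * (j+1-i).factorial * 2^(j+1-i) * cconst k i : ℕ) *
              (A₀ * (B₁⁻¹)^(k+1) * T^(k+1+j)) := by
              push_cast
              rw [← hTe, pow_succ]
              ring
      refine le_trans (Finset.sum_le_sum hterm) (le_of_eq ?_)
      have hsum : ((cconst (k+1) j : ℕ) : ℝ) = ∑ i ∈ Finset.range (j+2),
          (((j+1).choose i * (j+1-i).factorial * 2^(j+1-i) * cconst k i : ℕ) : ℝ) := by
        rw [cconst]; push_cast; ring
      rw [← Finset.sum_mul, ← hsum]
      ring
  -- vanishing outside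
  have hZ : ∀ k, ∀ y ∈ V, (y < a ∨ b < y) → g k y = 0 := by
    intro k
    induction k with
    | zero =>
      intro y _ hyo
      by_contra hne
      have hyI : y ∈ Set.Icc a b := hsupp hne
      rcases hyo with h1 | h1
      · exact absurd hyI.1 (not_le.mpr h1)
      · exact absurd hyI.2 (not_le.mpr h1)
    | succ k ih =>
      intro y hy hyo
      have hWopen : IsOpen (V ∩ (Set.Iio a ∪ Set.Ioi b)) :=
        hVopen.inter (isOpen_Iio.union isOpen_Ioi)
      have hyW : y ∈ V ∩ (Set.Iio a ∪ Set.Ioi b) := by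
        refine ⟨hy, ?_⟩
        rcases hyo with h1 | h1
        · exact Or.inl h1
        · exact Or.inr h1
      have hev : (fun t => g k t * h t) =ᶠ[𝓝 y] (fun _ => (0:ℂ)) := by
        filter_upwards [hWopen.mem_nhds hyW] with t ht
        rcases ht.2 with h1 | h1
        · rw [ih t ht.1 (Or.inl h1), zero_mul]
        · rw [ih t ht.1 (Or.inr h1), zero_mul]
      have : g (k+1) y = derivWithin (fun t => g k t * h t) V y := rfl
      rw [this, derivWithin_of_isOpen hVopen hy, hev.deriv_eq, deriv_const]
  have hga : ∀ k, k ≤ P → g k a = 0 :=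
    fun k hk => vanish_left hVopen (hIV ⟨le_refl a, hab⟩)
      ((hgsm k hk).continuousOn) (fun y hy hya => hZ k y hy (Or.inl hya))
  have hgb : ∀ k, k ≤ P → g k b = 0 :=
    fun k hk => vanish_right hVopen (hIV ⟨hab, le_refl b⟩)
      ((hgsm k hk).continuousOn) (fun y hy hyb => hZ k y hy (Or.inr hyb))
  set e : ℝ → ℂ := fun x : ℝ => Complex.exp (2*π*Complex.I * B x) with he
  -- integration by parts iteration
  have huIcc : Set.uIcc a b = Set.Icc a b := Set.uIcc_of_le hab
  have hφR : ContinuousOn (fun x : ℝ => deriv B (x:ℂ)) V :=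
    hφ.continuousOn.comp Complex.continuous_ofReal.continuousOn (fun x hx => hx)
  have hBR : ContinuousOn (fun x : ℝ => B (x:ℂ)) V :=
    hBanal.continuousOn.comp Complex.continuous_ofReal.continuousOn (fun x hx => hx)
  have hecont : ContinuousOn e V :=
    Complex.continuous_exp.comp_continuousOn (continuousOn_const.mul hBR)
  have hI : ∀ k, k ≤ P → (∫ x in a..b, A x * e x) = (-1:ℂ)^k * ∫ x in a..b, g k x * e x := by
    intro k
    induction k with
    | zero =>
      intro _
      rw [pow_zero, one_mul]
      rfl
    | succ k ih =>
      intro hk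
      have hk' : k ≤ P := by omega
      rw [ih hk']
      suffices hs : (∫ x in a..b, g k x * e x) = - ∫ x in a..b, g (k+1) x * e x by
        rw [hs]; ring
      have hu : ∀ x ∈ Set.uIcc a b, HasDerivAt (fun t => g k t * h t) (g (k+1) x) x := by
        intro x hx
        rw [huIcc] at hx
        have hxV := hIV hx
        have hc : ContDiffOn ℝ ((P - k : ℕ)) (fun t => g k t * h t) V :=
          (hgsm k hk').mul (hh (P-k))
        have hd : DifferentiableAt ℝ (fun t => g k t * h t) x := by
          have h1 : DifferentiableOn ℝ (fun t => g k t * h t) V :=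
            hc.differentiableOn (by exact_mod_cast (by omega : ¬ P - k = 0))
          exact h1.differentiableAt (hVopen.mem_nhds hxV)
        have heq : g (k+1) x = deriv (fun t => g k t * h t) x := by
          have h2 : g (k+1) x = derivWithin (fun t => g k t * h t) V x := rfl
          rw [h2, derivWithin_of_isOpen hVopen hxV]
        rw [heq]
        exact hd.hasDerivAt
      have hv : ∀ x ∈ Set.uIcc a b,
          HasDerivAt e ((2*π*Complex.I * deriv B x) * e x) x := by
        intro x hx
        rw [huIcc] at hx
        have hxU : (x:ℂ) ∈ U := hIV hx
        have h1 : HasDerivAt B (deriv B (x:ℂ)) (x:ℂ) :=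
          ((hBanal (x:ℂ) hxU).differentiableAt).hasDerivAt
        have h3 : HasDerivAt (fun t : ℝ => 2*π*Complex.I * B t)
            (2*π*Complex.I * deriv B (x:ℂ)) x := h1.comp_ofReal.const_mul _
        have h4 := h3.cexp
        convert h4 using 1
        ring
      have hu' : IntervalIntegrable (g (k+1)) volume a b := by
        apply ContinuousOn.intervalIntegrable
        rw [huIcc]
        exact ((hgsm (k+1) hk).continuousOn).mono hIV
      have hv' : IntervalIntegrable (fun x => (2*π*Complex.I * deriv B x) * e x)
          volume a b := by
        apply ContinuousOn.intervalIntegrable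
        rw [huIcc]
        exact ((continuousOn_const.mul hφR).mul hecont).mono hIV
      have hibp := intervalIntegral.integral_mul_deriv_eq_deriv_mul hu hv hu' hv'
      have hLHS : (∫ x in a..b, (g k x * h x) * ((2*π*Complex.I * deriv B x) * e x))
          = ∫ x in a..b, g k x * e x := by
        apply intervalIntegral.integral_congr
        intro x hx
        rw [huIcc] at hx
        have hinv : h x * (2*π*Complex.I * deriv B (x:ℂ)) = 1 :=
          inv_mul_cancel₀ (hne (x:ℂ) (hIV hx))
        calc (g k x * h x) * ((2*π*Complex.I * deriv B x) * e x)
            = g k x * (h x * (2*π*Complex.I * deriv B x)) * e x := by ring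
          _ = g k x * e x := by rw [hinv]; ring
      have h0a : (fun t => g k t * h t) a * e a = 0 := by
        simp [hga k hk']
      have h0b : (fun t => g k t * h t) b * e b = 0 := by
        simp [hgb k hk']
      rw [h0a, h0b, hLHS] at hibp
      rw [hibp]
      ring
  rw [hI P le_rfl, norm_mul]
  have hnorm1 : ‖((-1:ℂ))^P‖ = 1 := by simp
  rw [hnorm1, one_mul]
  have hbnd : ∀ x ∈ Set.uIoc a b, ‖g P x * e x‖ ≤ (cconst P 0) * A₀ * (B₁⁻¹)^P * T^P := by
    intro x hx
    have hxI : x ∈ Set.Icc a b := by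
      rw [Set.uIoc_of_le hab] at hx
      exact Set.Ioc_subset_Icc_self hx
    have h1 : ‖g P x‖ ≤ cconst P 0 * A₀ * (B₁⁻¹)^P * T^P := by
      have h2 := hbound P 0 (by omega) x hxI
      rwa [iteratedDerivWithin_zero, Nat.add_zero] at h2
    have h2 : ‖e x‖ = 1 := by
      have h3 : (2*(π:ℂ)*Complex.I * B x).re = 0 := by
        simp [Complex.mul_re, Complex.mul_im, hBim x hxI]
      rw [he]
      rw [Complex.norm_exp, h3, Real.exp_zero]
    rw [norm_mul, h2, mul_one]
    exact h1
  have hest := intervalIntegral.norm_integral_le_of_norm_le_const hbnd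
  rw [abs_of_nonneg (sub_nonneg.mpr hab)] at hest
  refine le_trans hest (le_of_eq ?_)
  have hr : ((A₁*B₁):ℝ)^(-(P:ℝ)) = ((A₁*B₁)⁻¹)^P := by
    rw [Real.rpow_neg (by positivity), Real.rpow_natCast, inv_pow]
  have hTT : T^P = (A₁⁻¹)^P * (1+A₁/ρ)^P := by
    rw [← mul_pow]
    congr 1
    rw [hT]
    field_simp
  rw [hr, hTT, mul_inv, mul_pow]
  ring
end

section
/- First-derivative test for oscillatory integrals: if A : [a,b] → ℂ is C¹ with |A(x)| ≤ A₀ and |A'(x)| ≤ A₀/A₁ on [a,b], A(a) = A(b) = 0, and B : [a,b] → ℝ is C² with |B'(x)| ≥ B₁ > 0 and |B''(x)| ≤ B₂ on [a,b], then |∫_a^b A(x) e^{2πi B(x)} dx| ≤ (1/(2π)) · (b−a) · (A₀/(A₁B₁) + A₀B₂/B₁²). -/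
/-!
With `u = A / (2πi B')` one has `A e^{2πiB} = u · (e^{2πiB})'`. Integrating by parts, the boundary
terms vanish because `A(a) = A(b) = 0`, so the integral equals `-∫ u' e^{2πiB}`, and
`|u'| ≤ (|A'| / |B'| + |A| |B''| / B'^2) / (2π)` pointwise.
-/

open Real MeasureTheory

open Set intervalIntegral
open scoped Interval

lemma norm_cexp_two_pi_I_mul_ofReal (t : ℝ) : ‖Complex.exp (2 * π * Complex.I * t)‖ = 1 := by
  rw [show 2 * π * Complex.I * t = ((2 * π * t : ℝ) : ℂ) * Complex.I by push_cast; ring]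
  exact Complex.norm_exp_ofReal_mul_I _

lemma HasDerivAt.cexp_two_pi_I_mul {B : ℝ → ℝ} {B' x : ℝ} (hB : HasDerivAt B B' x) :
    HasDerivAt (fun y ↦ Complex.exp (2 * π * Complex.I * B y))
      (2 * π * Complex.I * B' * Complex.exp (2 * π * Complex.I * B x)) x := by
  simpa only [mul_comm (Complex.exp _)] using (hB.ofReal_comp.const_mul (2 * π * Complex.I)).cexp

lemma HasDerivAt.div_two_pi_I_mul {A : ℝ → ℂ} {B' : ℝ → ℝ} {A'x : ℂ} {B''x x : ℝ}
    (hA : HasDerivAt A A'x x) (hB' : HasDerivAt B' B''x x) (hx : B' x ≠ 0) :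
    HasDerivAt (fun y ↦ A y / (2 * π * Complex.I * B' y))
      (A'x / (2 * π * Complex.I * B' x) - A x * B''x / (2 * π * Complex.I * B' x ^ 2)) x := by
  have hc : (2 * π * Complex.I : ℂ) ≠ 0 := by simp [pi_ne_zero]
  have hx' : (B' x : ℂ) ≠ 0 := by exact_mod_cast hx
  have hdenom := hB'.ofReal_comp.const_mul (2 * π * Complex.I)
  refine (hA.fun_div hdenom (mul_ne_zero hc hx')).congr_deriv ?_
  field_simp

theorem integral_mul_cexp_two_pi_I_eq_neg {a b : ℝ} {A A' : ℝ → ℂ} {B B' B'' : ℝ → ℝ}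
    (hA : ∀ x ∈ [[a, b]], HasDerivAt A (A' x) x) (hA' : ContinuousOn A' [[a, b]])
    (hB : ∀ x ∈ [[a, b]], HasDerivAt B (B' x) x) (hB' : ∀ x ∈ [[a, b]], HasDerivAt B' (B'' x) x)
    (hB'' : ContinuousOn B'' [[a, b]]) (hB'0 : ∀ x ∈ [[a, b]], B' x ≠ 0)
    (hAa : A a = 0) (hAb : A b = 0) :
    ∫ x in a..b, A x * Complex.exp (2 * π * Complex.I * B x) =
      -∫ x in a..b,
        (A' x / (2 * π * Complex.I * B' x) - A x * B'' x / (2 * π * Complex.I * B' x ^ 2)) *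
          Complex.exp (2 * π * Complex.I * B x) := by
  have hc : (2 * π * Complex.I : ℂ) ≠ 0 := by simp [pi_ne_zero]
  have hAc : ContinuousOn A [[a, b]] := fun x hx ↦ (hA x hx).continuousAt.continuousWithinAt
  have hBc : ContinuousOn B [[a, b]] := fun x hx ↦ (hB x hx).continuousAt.continuousWithinAt
  have hB'c : ContinuousOn B' [[a, b]] := fun x hx ↦ (hB' x hx).continuousAt.continuousWithinAt
  have heB : ContinuousOn (fun x ↦ Complex.exp (2 * π * Complex.I * B x)) [[a, b]] := by fun_prop
  have hB'c' : ∀ x ∈ [[a, b]], (B' x : ℂ) ≠ 0 := fun x hx ↦ by exact_mod_cast hB'0 x hx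
  have hibp := integral_mul_deriv_eq_deriv_mul
    (fun x hx ↦ (hA x hx).div_two_pi_I_mul (hB' x hx) (hB'0 x hx))
    (fun x hx ↦ (hB x hx).cexp_two_pi_I_mul) ?_ ?_
  · rw [hAa, hAb, zero_div, zero_div, zero_mul, zero_mul, sub_zero, zero_sub] at hibp
    rw [← hibp]
    refine integral_congr fun x hx ↦ ?_
    field_simp [hB'c' x hx]
  · refine ContinuousOn.intervalIntegrable <|
      (hA'.div (by fun_prop) fun x hx ↦ mul_ne_zero hc (hB'c' x hx)).sub
        ((hAc.mul (by fun_prop)).div (by fun_prop) fun x hx ↦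
          mul_ne_zero hc (pow_ne_zero 2 (hB'c' x hx)))
  · exact (ContinuousOn.mul (by fun_prop) heB).intervalIntegrable

lemma norm_div_two_pi_I_sub_le {w z : ℂ} {s t K A₀ B₁ B₂ : ℝ} (hw : ‖w‖ ≤ K) (hz : ‖z‖ ≤ A₀)
    (hB₁ : 0 < B₁) (hs : B₁ ≤ |s|) (ht : |t| ≤ B₂) :
    ‖w / (2 * π * Complex.I * s) - z * t / (2 * π * Complex.I * s ^ 2)‖ ≤
      1 / (2 * π) * (K / B₁ + A₀ * B₂ / B₁ ^ 2) := by
  have h2π : ‖(2 * π * Complex.I : ℂ)‖ = 2 * π := by simp [abs_of_pos pi_pos]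
  have hsq : B₁ ^ 2 ≤ s ^ 2 := by nlinarith [sq_abs s]
  calc _ ≤ ‖w / (2 * π * Complex.I * s)‖ + ‖z * t / (2 * π * Complex.I * s ^ 2)‖ :=
        norm_sub_le _ _
    _ = ‖w‖ / (2 * π * |s|) + ‖z‖ * |t| / (2 * π * s ^ 2) := by
      simp only [norm_div, norm_mul, norm_pow, h2π, Complex.norm_real, Real.norm_eq_abs, sq_abs]
    _ ≤ K / (2 * π * B₁) + A₀ * B₂ / (2 * π * B₁ ^ 2) := by
      have hπ := pi_pos
      have hK : 0 ≤ K := (norm_nonneg w).trans hw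
      have hA₀ : 0 ≤ A₀ := (norm_nonneg z).trans hz
      have hB₂ : 0 ≤ B₂ := (abs_nonneg t).trans ht
      gcongr
    _ = _ := by field_simp

theorem stmt4_general (a b A₀ A₁ B₁ B₂ : ℝ) (hab : a ≤ b)
    (hB₁ : 0 < B₁) (A : ℝ → ℂ) (B : ℝ → ℝ)
    (hA : ContDiff ℝ 1 A) (hB : ContDiff ℝ 2 B)
    (hAbd : ∀ x ∈ Set.Icc a b, ‖A x‖ ≤ A₀)
    (hA'bd : ∀ x ∈ Set.Icc a b, ‖deriv A x‖ ≤ A₀ / A₁)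
    (hAa : A a = 0) (hAb : A b = 0)
    (hB' : ∀ x ∈ Set.Icc a b, B₁ ≤ |deriv B x|)
    (hB'' : ∀ x ∈ Set.Icc a b, |deriv (deriv B) x| ≤ B₂) :
    ‖∫ x in a..b, A x * Complex.exp (2*π*Complex.I * (B x : ℂ))‖ ≤
      (1/(2*π)) * (b - a) * (A₀/(A₁*B₁) + A₀*B₂/B₁^2) := by
  obtain ⟨hBd, -, hB'C1⟩ := contDiff_succ_iff_deriv.mp (show ContDiff ℝ (1 + 1) B from hB)
  have hB'd : Differentiable ℝ (deriv B) := hB'C1.differentiable one_ne_zero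
  have hB'0 : ∀ x ∈ [[a, b]], deriv B x ≠ 0 := fun x hx ↦
    abs_pos.mp (hB₁.trans_le (hB' x (uIcc_of_le hab ▸ hx)))
  rw [integral_mul_cexp_two_pi_I_eq_neg (fun x _ ↦ (hA.differentiable one_ne_zero x).hasDerivAt)
      (hA.continuous_deriv le_rfl).continuousOn (fun x _ ↦ (hBd x).hasDerivAt)
      (fun x _ ↦ (hB'd x).hasDerivAt) (hB'C1.continuous_deriv le_rfl).continuousOn hB'0 hAa hAb,
    norm_neg]
  calc _ ≤ 1 / (2 * π) * (A₀ / A₁ / B₁ + A₀ * B₂ / B₁ ^ 2) * |b - a| := by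
        refine norm_integral_le_of_norm_le_const fun x hx ↦ ?_
        have hx : x ∈ Icc a b := Ioc_subset_Icc_self (uIoc_of_le hab ▸ hx)
        rw [norm_mul, norm_cexp_two_pi_I_mul_ofReal, mul_one]
        exact norm_div_two_pi_I_sub_le (hA'bd x hx) (hAbd x hx) hB₁ (hB' x hx) (hB'' x hx)
    _ = _ := by rw [abs_of_nonneg (sub_nonneg.mpr hab), div_div]; ring

theorem stmt4 (a b A₀ A₁ B₁ B₂ : ℝ) (hab : a ≤ b) (hA₀ : 0 < A₀) (hA₁ : 0 < A₁)
    (hB₁ : 0 < B₁) (hB₂ : 0 < B₂) (A : ℝ → ℂ) (B : ℝ → ℝ)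
    (hA : ContDiff ℝ 1 A) (hB : ContDiff ℝ 2 B)
    (hAbd : ∀ x ∈ Set.Icc a b, ‖A x‖ ≤ A₀)
    (hA'bd : ∀ x ∈ Set.Icc a b, ‖deriv A x‖ ≤ A₀ / A₁)
    (hAa : A a = 0) (hAb : A b = 0)
    (hB' : ∀ x ∈ Set.Icc a b, B₁ ≤ |deriv B x|)
    (hB'' : ∀ x ∈ Set.Icc a b, |deriv (deriv B) x| ≤ B₂) :
    ‖∫ x in a..b, A x * Complex.exp (2*π*Complex.I * (B x : ℂ))‖ ≤
      (1/(2*π)) * (b - a) * (A₀/(A₁*B₁) + A₀*B₂/B₁^2) :=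
  stmt4_general a b A₀ A₁ B₁ B₂ hab hB₁ A B hA hB hAbd hA'bd hAa hAb hB' hB''
end

section
/- There exists an absolute constant x₀ such that for all reals x ≥ x₀, all integers m, n with 1 ≤ m < n, and all real k ≥ 1: with B(x) = 2√(m(x+√x))/k − 2√(nx)/k, one has |B'(x)| ≥ (3/4)·(√n − √m)/(k√x). -/
open Real

/-!
Writing `s = √x`, one has `((1 + 1/(2s)) / √(x + s))² = (1 + 1/(4(x + s))) / x`, so the `m`-term
of `B'` exceeds `√m/√x` by a factor of at most `1 + 1/(8x)`. The error `√m/(8x)` is at most a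
quarter of `√n - √m`, because `√n - √m = (n - m)/(√n + √m) ≥ 1/(2√x)` once `m < n ≤ x`.
-/

lemma add_half_le_mul_sqrt_sq_add {s : ℝ} (hs : 0 < s) :
    s + 1 / 2 ≤ (1 + 1 / (8 * s ^ 2)) * √(s ^ 2 + s) := by
  rw [← sqrt_sq (by positivity : 0 ≤ 1 + 1 / (8 * s ^ 2)), ← sqrt_mul (by positivity),
    le_sqrt (by positivity) (by positivity)]
  have h : 1 + 1 / (4 * s ^ 2) ≤ (1 + 1 / (8 * s ^ 2)) ^ 2 := by
    have h2 : 2 * (1 / (8 * s ^ 2)) = 1 / (4 * s ^ 2) := by field_simp; norm_num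
    nlinarith [sq_nonneg (1 / (8 * s ^ 2))]
  calc (s + 1 / 2) ^ 2 ≤ (1 + 1 / (4 * s ^ 2)) * (s ^ 2 + s) := by
        field_simp
        nlinarith
    _ ≤ _ := by gcongr

lemma one_add_inv_two_sqrt_div_le {x : ℝ} (hx : 0 < x) :
    (1 + 1 / (2 * √x)) / √(x + √x) ≤ (1 + 1 / (8 * x)) / √x := by
  have hs : 0 < √x := sqrt_pos.2 hx
  have h := add_half_le_mul_sqrt_sq_add hs
  rw [sq_sqrt hx.le] at h
  rw [div_le_div_iff₀ (sqrt_pos.2 (by positivity)) hs]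
  calc (1 + 1 / (2 * √x)) * √x = √x + 1 / 2 := by field_simp
    _ ≤ _ := h

lemma sqrt_le_two_mul_mul_sqrt_sub_sqrt {m n x : ℝ} (hm : 0 ≤ m) (hmn : m + 1 ≤ n) (hnx : n ≤ x) :
    √m ≤ 2 * x * (√n - √m) := by
  have ha := sqrt_nonneg m
  have hb : 1 ≤ √n := one_le_sqrt.2 (by linarith)
  have hab : √m ≤ √n := sqrt_le_sqrt (by linarith)
  have hscaled : √m * (√n + √m) ≤ 2 * x * (√n - √m) * (√n + √m) :=
    calc √m * (√n + √m) ≤ 2 * √n ^ 2 := by nlinarith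
      _ = 2 * n := by rw [sq_sqrt (by linarith)]
      _ ≤ 2 * x * (n - m) := by nlinarith
      _ = 2 * x * (√n - √m) * (√n + √m) := by
        linear_combination (2 * x) * sq_sqrt hm - (2 * x) * sq_sqrt (by linarith : 0 ≤ n)
  exact le_of_mul_le_mul_right hscaled (by linarith)

lemma hasDerivAt_two_sqrt_mul_add_sqrt_sub_two_sqrt_mul {c d k x : ℝ} (hc : 0 < c) (hd : 0 < d)
    (hx : 0 < x) :
    HasDerivAt (fun y => 2 * √(c * (y + √y)) / k - 2 * √(d * y) / k)
      ((√c * (1 + 1 / (2 * √x)) / √(x + √x) - √d / √x) / k) x := by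
  have hinner : HasDerivAt (fun y => c * (y + √y)) (c * (1 + 1 / (2 * √x))) x :=
    ((hasDerivAt_id x).add (hasDerivAt_sqrt hx.ne')).const_mul c
  have hlin : HasDerivAt (fun y => d * y) d x := by
    simpa using (hasDerivAt_id x).const_mul d
  refine ((((hinner.sqrt (by positivity)).const_mul 2).div_const k).sub
    (((hlin.sqrt (by positivity)).const_mul 2).div_const k)).congr_deriv ?_
  rw [sqrt_mul hc.le, sqrt_mul hd.le]
  field_simp
  linear_combination (2 * √c * √(x + √x) / k) * mul_self_sqrt hd.le
    - ((2 * √x + 1) * √d / k) * mul_self_sqrt hc.le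

lemma three_quarters_mul_sqrt_sub_sqrt_div_le {m n x k : ℝ} (hm : 0 ≤ m) (hmn : m + 1 ≤ n)
    (hnx : n ≤ x) (hk : 0 < k) :
    3 / 4 * (√n - √m) / (k * √x) ≤ -((√m * (1 + 1 / (2 * √x)) / √(x + √x) - √n / √x) / k) := by
  have hx : 0 < x := by linarith
  have hcorr : √m * (1 + 1 / (2 * √x)) / √(x + √x) ≤ √m * (1 + 1 / (8 * x)) / √x := by
    simp only [mul_div_assoc]
    exact mul_le_mul_of_nonneg_left (one_add_inv_two_sqrt_div_le hx) (sqrt_nonneg m)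
  have hsmall : √m / (8 * x) ≤ (√n - √m) / 4 := by
    rw [div_le_div_iff₀ (by positivity) (by norm_num)]
    linarith [sqrt_le_two_mul_mul_sqrt_sub_sqrt hm hmn hnx]
  calc 3 / 4 * (√n - √m) / (k * √x) = ((√n - √m) - (√n - √m) / 4) / √x / k := by
        field_simp; ring
    _ ≤ (√n - √m - √m / (8 * x)) / √x / k := by gcongr
    _ = (√n / √x - √m * (1 + 1 / (8 * x)) / √x) / k := by ring
    _ ≤ (√n / √x - √m * (1 + 1 / (2 * √x)) / √(x + √x)) / k := by gcongr
    _ = _ := by ring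

theorem stmt6 :
    ∃ x₀ : ℝ, ∀ x : ℝ, x₀ ≤ x → ∀ m n : ℕ, 1 ≤ m → m < n → (n:ℝ) ≤ x → ∀ k : ℝ, 1 ≤ k →
      (3/4) * (Real.sqrt n - Real.sqrt m)/(k*Real.sqrt x) ≤
        |deriv (fun y => 2*Real.sqrt ((m:ℝ)*(y+Real.sqrt y))/k - 2*Real.sqrt ((n:ℝ)*y)/k) x| := by
  refine ⟨0, fun x _ m n hm hmn hnx k hk => ?_⟩
  have hm0 : (0 : ℝ) < m := by exact_mod_cast hm
  have hmn' : (m : ℝ) + 1 ≤ n := by exact_mod_cast hmn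
  have hx : 0 < x := by linarith
  rw [(hasDerivAt_two_sqrt_mul_add_sqrt_sub_two_sqrt_mul hm0 (by linarith) hx).deriv]
  exact (three_quarters_mul_sqrt_sub_sqrt_div_le hm0.le hmn' hnx (by linarith)).trans
    (neg_le_abs _)
end

section
/- Diagonal estimate: Let a(n) satisfy |a(n)| ≤ d(n) ≪ n^{ε} (divisor bound), let 1 ≤ k ≤ M^{1/4}, Δ ≤ M, and let w be a weight supported on [M, M+Δ] with 0 ≤ w ≤ 1. Then (k/2π²) ∑_{n ≤ M} |a(n)|² n^{−3/2} ∫_M^{M+Δ} w(x) x^{1/2} (cos(4π√(n(x+√x))/k − π/4) − cos(4π√(nx)/k − π/4))² dx ≤ C_ε k^{ε} Δ M^{1/2+ε}. -/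
open Real Finset MeasureTheory

/-! The diagonal term is estimated trivially. The two phases differ by
`(4π√n/k)(√(x + √x) - √x) ≤ 2π√n/k`, and `(cos u - cos v)² ≤ 2|u - v|`, so each integral is
at most `Δ √(2M) · 4π√n/k`. The factor `k` then cancels against the prefactor, leaving
`Δ √M ∑_{n ≤ M} |a(n)|²/n`, which is `≪ Δ M^{1/2+ε}` by the bound on `a(n)` and the
harmonic sum `∑_{n ≤ M} 1/n ≤ 1 + log M ≪_ε M^{ε/2}`. -/

lemma sq_cos_sub_cos_le (u v : ℝ) : (cos u - cos v) ^ 2 ≤ 2 * |u - v| := by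
  have h2 : |cos u - cos v| ≤ 2 :=
    (abs_sub _ _).trans (by linarith [abs_cos_le_one u, abs_cos_le_one v])
  rw [← sq_abs, sq]
  exact mul_le_mul h2 (abs_cos_sub_cos_le u v) (abs_nonneg _) zero_le_two

lemma sqrt_add_sqrt_sub_sqrt_le {x : ℝ} (hx : 0 ≤ x) : √(x + √x) - √x ≤ 1 / 2 := by
  have : √(x + √x) ≤ √x + 1 / 2 :=
    sqrt_le_iff.2 ⟨by positivity, by nlinarith [sq_sqrt hx, sqrt_nonneg x]⟩
  linarith

lemma sq_cos_sub_cos_phase_le (n : ℕ) {k x : ℝ} (hk : 0 ≤ k) (hx : 0 ≤ x) :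
    (cos (4 * π * √(n * (x + √x)) / k - π / 4) - cos (4 * π * √(n * x) / k - π / 4)) ^ 2
      ≤ 4 * π * √n / k := by
  have hgap : 0 ≤ √(x + √x) - √x :=
    sub_nonneg.2 (sqrt_le_sqrt (by linarith [sqrt_nonneg x]))
  have hphase : 4 * π * √(n * (x + √x)) / k - π / 4 - (4 * π * √(n * x) / k - π / 4)
      = 4 * π * √n / k * (√(x + √x) - √x) := by
    rw [sqrt_mul n.cast_nonneg, sqrt_mul n.cast_nonneg]; ring
  calc _ ≤ 2 * |4 * π * √n / k * (√(x + √x) - √x)| := hphase ▸ sq_cos_sub_cos_le _ _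
    _ = 2 * (4 * π * √n / k) * (√(x + √x) - √x) := by
      rw [abs_of_nonneg (mul_nonneg (by positivity) hgap)]; ring
    _ ≤ 2 * (4 * π * √n / k) * (1 / 2) := by gcongr; exact sqrt_add_sqrt_sub_sqrt_le hx
    _ = 4 * π * √n / k := by ring

lemma integral_weight_sq_cos_sub_cos_phase_le (n : ℕ) {k M Δ : ℝ} {w : ℝ → ℝ} (hk : 0 ≤ k)
    (hΔ : 0 ≤ Δ) (hΔM : Δ ≤ M) (hw : ∀ x, 0 ≤ w x ∧ w x ≤ 1) :
    ∫ x in M..(M + Δ), w x * √x *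
        (cos (4 * π * √(n * (x + √x)) / k - π / 4) - cos (4 * π * √(n * x) / k - π / 4)) ^ 2
      ≤ Δ * (√(2 * M) * (4 * π * √n / k)) := by
  refine (Real.le_norm_self _).trans
    ((intervalIntegral.norm_integral_le_of_norm_le_const
      (C := √(2 * M) * (4 * π * √n / k)) ?_).trans_eq ?_)
  · rintro x ⟨hMx, hxMΔ⟩
    rw [min_eq_left (by linarith)] at hMx
    rw [max_eq_right (by linarith)] at hxMΔ
    have hx : 0 ≤ x := by linarith
    rw [norm_of_nonneg (by have := (hw x).1; positivity)]
    have hsqrt : √x ≤ √(2 * M) := sqrt_le_sqrt (by linarith)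
    gcongr
    · exact (mul_le_of_le_one_left (sqrt_nonneg x) (hw x).2).trans hsqrt
    · exact sq_cos_sub_cos_phase_le n hk hx
  · rw [add_sub_cancel_left, abs_of_nonneg hΔ, mul_comm]

lemma one_add_log_le_rpow {x δ : ℝ} (hx : 1 ≤ x) (hδ : 0 < δ) :
    1 + log x ≤ (1 + 1 / δ) * x ^ δ :=
  calc 1 + log x ≤ x ^ δ + x ^ δ / δ :=
        add_le_add (one_le_rpow hx hδ.le) (log_le_rpow_div (by linarith) hδ)
    _ = (1 + 1 / δ) * x ^ δ := by ring

lemma sum_Icc_floor_inv_le_one_add_log {X : ℝ} (hX : 1 ≤ X) :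
    ∑ n ∈ Icc 1 ⌊X⌋₊, (n : ℝ)⁻¹ ≤ 1 + log X := by
  have hN : (1 : ℝ) ≤ ⌊X⌋₊ := by exact_mod_cast Nat.le_floor (by exact_mod_cast hX)
  have hharm := harmonic_le_one_add_log ⌊X⌋₊
  simp only [harmonic_eq_sum_Icc, Rat.cast_sum, Rat.cast_inv, Rat.cast_natCast] at hharm
  linarith [log_le_log (by linarith) (Nat.floor_le (by linarith : (0 : ℝ) ≤ X))]

lemma sum_sq_norm_div_le_of_norm_le_rpow {a : ℕ → ℂ} {C δ X : ℝ} (hδ : 0 < δ) (hX : 1 ≤ X)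
    (ha : ∀ n : ℕ, 1 ≤ n → ‖a n‖ ≤ C * (n : ℝ) ^ δ) :
    ∑ n ∈ Icc 1 ⌊X⌋₊, ‖a n‖ ^ 2 / n ≤ C ^ 2 * (1 + 1 / (2 * δ)) * X ^ (4 * δ) := by
  have hterm : ∀ n ∈ Icc 1 ⌊X⌋₊, ‖a n‖ ^ 2 / n ≤ C ^ 2 * X ^ (2 * δ) * (n : ℝ)⁻¹ := by
    intro n hn
    obtain ⟨h1n, hnN⟩ := mem_Icc.1 hn
    have hn0 : (0 : ℝ) ≤ n := n.cast_nonneg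
    have hnX : (n : ℝ) ≤ X := (Nat.cast_le.2 hnN).trans (Nat.floor_le (by linarith))
    calc ‖a n‖ ^ 2 / n ≤ (C * (n : ℝ) ^ δ) ^ 2 / n := by gcongr; exact ha n h1n
      _ = C ^ 2 * (n : ℝ) ^ (2 * δ) * (n : ℝ)⁻¹ := by
        rw [mul_pow, ← rpow_mul_natCast hn0]; push_cast; ring_nf
      _ ≤ C ^ 2 * X ^ (2 * δ) * (n : ℝ)⁻¹ := by gcongr
  calc _ ≤ ∑ n ∈ Icc 1 ⌊X⌋₊, C ^ 2 * X ^ (2 * δ) * (n : ℝ)⁻¹ := sum_le_sum hterm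
    _ = C ^ 2 * X ^ (2 * δ) * ∑ n ∈ Icc 1 ⌊X⌋₊, (n : ℝ)⁻¹ := by rw [mul_sum]
    _ ≤ C ^ 2 * X ^ (2 * δ) * ((1 + 1 / (2 * δ)) * X ^ (2 * δ)) := by
      gcongr
      exact (sum_Icc_floor_inv_le_one_add_log hX).trans (one_add_log_le_rpow hX (by positivity))
    _ = C ^ 2 * (1 + 1 / (2 * δ)) * X ^ (4 * δ) := by
      rw [show 4 * δ = 2 * δ + 2 * δ by ring, rpow_add (by linarith)]; ring

lemma sum_mul_integral_weight_sq_cos_sub_cos_phase_le (a : ℕ → ℂ) (N : ℕ) {k M Δ : ℝ}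
    {w : ℝ → ℝ} (hk : 0 ≤ k) (hΔ : 0 ≤ Δ) (hΔM : Δ ≤ M) (hw : ∀ x, 0 ≤ w x ∧ w x ≤ 1) :
    ∑ n ∈ Icc 1 N, ‖a n‖ ^ 2 * (n : ℝ) ^ (-(3 : ℝ) / 2) *
      ∫ x in M..(M + Δ), w x * √x *
        (cos (4 * π * √(n * (x + √x)) / k - π / 4) - cos (4 * π * √(n * x) / k - π / 4)) ^ 2
      ≤ 4 * π * Δ * √(2 * M) / k * ∑ n ∈ Icc 1 N, ‖a n‖ ^ 2 / n := by
  rw [mul_sum]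
  refine sum_le_sum fun n hn ↦ ?_
  have hn0 : (0 : ℝ) < n := by exact_mod_cast (mem_Icc.1 hn).1
  have hexp : (n : ℝ) ^ (-(3 : ℝ) / 2) * √n = (n : ℝ)⁻¹ := by
    rw [sqrt_eq_rpow, ← rpow_add hn0]; norm_num [rpow_neg_one]
  calc _ ≤ ‖a n‖ ^ 2 * (n : ℝ) ^ (-(3 : ℝ) / 2) * (Δ * (√(2 * M) * (4 * π * √n / k))) := by
        gcongr; exact integral_weight_sq_cos_sub_cos_phase_le n hk hΔ hΔM hw
    _ = _ := by rw [div_eq_mul_inv (‖a n‖ ^ 2), ← hexp]; ring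

theorem stmt10 (a : ℕ → ℂ)
    (ha : ∀ ε > (0:ℝ), ∃ C > (0:ℝ), ∀ n : ℕ, 1 ≤ n → ‖a n‖ ≤ C * (n:ℝ)^ε) :
    ∀ ε > (0:ℝ), ∃ C > (0:ℝ), ∀ (k M Δ : ℝ) (w : ℝ → ℝ),
      1 ≤ k → k ≤ M^((1:ℝ)/4) → 1 ≤ M → 0 < Δ → Δ ≤ M →
      (∀ x, 0 ≤ w x ∧ w x ≤ 1) → Function.support w ⊆ Set.Icc M (M+Δ) →
      k/(2*π^2) * ∑ n ∈ Finset.Icc 1 ⌊M⌋₊, ‖a n‖^2 * (n:ℝ)^(-(3:ℝ)/2) *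
        ∫ x in M..(M+Δ), w x * Real.sqrt x *
          (Real.cos (4*π*Real.sqrt ((n:ℝ)*(x+Real.sqrt x))/k - π/4)
            - Real.cos (4*π*Real.sqrt ((n:ℝ)*x)/k - π/4))^2
      ≤ C * k^ε * Δ * M^(1/2+ε) := by
  intro ε hε
  obtain ⟨C₁, hC₁, hA⟩ := ha (ε / 4) (by positivity)
  refine ⟨C₁ ^ 2 * (1 + 2 / ε), by positivity, ?_⟩
  intro k M Δ w hk _ hM hΔ hΔM hw _
  have hsum := sum_sq_norm_div_le_of_norm_le_rpow (by positivity : 0 < ε / 4) hM hA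
  have hsqrt : 2 * √(2 * M) ≤ π * √M := by
    rw [sqrt_mul zero_le_two]
    have : √2 ≤ 3 / 2 := sqrt_le_iff.2 ⟨by norm_num, by norm_num⟩
    nlinarith [pi_gt_three, sqrt_nonneg M]
  have hpow : √M * M ^ ε = M ^ (1 / 2 + ε) := by
    rw [sqrt_eq_rpow, ← rpow_add (by linarith)]
  have hkε : 1 ≤ k ^ ε := one_le_rpow hk hε.le
  calc _ ≤ k / (2 * π ^ 2) * (4 * π * Δ * √(2 * M) / k * ∑ n ∈ Icc 1 ⌊M⌋₊, ‖a n‖ ^ 2 / n) := by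
        gcongr
        exact sum_mul_integral_weight_sq_cos_sub_cos_phase_le a _ (by linarith) hΔ.le hΔM hw
    _ = 2 * √(2 * M) / π * Δ * ∑ n ∈ Icc 1 ⌊M⌋₊, ‖a n‖ ^ 2 / n := by
        field_simp; ring
    _ ≤ π * √M / π * Δ * (C₁ ^ 2 * (1 + 1 / (2 * (ε / 4))) * M ^ (4 * (ε / 4))) := by
        gcongr
    _ = C₁ ^ 2 * (1 + 2 / ε) * 1 * Δ * M ^ (1 / 2 + ε) := by
        rw [← hpow]; field_simp; ring_nf
    _ ≤ C₁ ^ 2 * (1 + 2 / ε) * k ^ ε * Δ * M ^ (1 / 2 + ε) := by gcongr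
end
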